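/- For the function f(s) = −1/s − s·log s + ((1+s)³/s²)·log(1+s), one has 3·f(ν) − 15/2 > 0 for every ν > 0. -/

import Mathlib

/-!
Clearing denominators, `3 f(ν) - 15/2 = 3 H(ν) / ν²` with
`H(s) = (1+s)³ log(1+s) - s³ log s - s - 5s²/2`. Both `H` and
`H'(s) = 3((1+s)² log(1+s) - s² log s - s)` vanish at `0`, and
`H''(s) = 6((1+s) log(1+s) - s log s) > 0`, so `H' > 0` and then `H > 0` on `(0, ∞)`.
-/

open Real Set

lemma continuous_pow_succ_mul_log (n : ℕ) : Continuous fun x : ℝ => x ^ (n + 1) * log x := by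
  simpa only [pow_succ, mul_assoc] using (continuous_pow n).fun_mul continuous_mul_log

lemma hasDerivAt_pow_succ_mul_log (n : ℕ) {x : ℝ} (hx : x ≠ 0) :
    HasDerivAt (fun x => x ^ (n + 1) * log x) ((n + 1) * x ^ n * log x + x ^ n) x := by
  refine ((hasDerivAt_pow (n + 1) x).fun_mul (hasDerivAt_log hx)).congr_deriv ?_
  rw [pow_succ]
  field_simp
  push_cast
  ring

lemma mul_log_lt_one_add_mul_log_one_add {s : ℝ} (hs : 0 < s) :
    s * log s < (1 + s) * log (1 + s) := by
  have hlog : log s < log (1 + s) := log_lt_log hs (lt_one_add s)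
  have hlog_pos : 0 < log (1 + s) := log_pos (by linarith)
  nlinarith [mul_pos hs (sub_pos.2 hlog)]

lemma apply_lt_apply_of_hasDerivAt_pos {f f' : ℝ → ℝ} {a b : ℝ} (hf : ContinuousOn f (Ici a))
    (hf' : ∀ x, a < x → HasDerivAt f (f' x) x) (hf'_pos : ∀ x, a < x → 0 < f' x) (hab : a < b) :
    f a < f b := by
  refine strictMonoOn_of_hasDerivWithinAt_pos (f' := f') (convex_Ici a) hf (fun x hx => ?_)
    (fun x hx => ?_) self_mem_Ici hab.le hab
  all_goals rw [interior_Ici, mem_Ioi] at hx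
  exacts [(hf' x hx).hasDerivWithinAt, hf'_pos x hx]

noncomputable def gluonNumerator (s : ℝ) : ℝ :=
  (1 + s) ^ 3 * log (1 + s) - s ^ 3 * log s - s - 5 / 2 * s ^ 2

noncomputable def gluonNumeratorDeriv (s : ℝ) : ℝ :=
  3 * ((1 + s) ^ 2 * log (1 + s) - s ^ 2 * log s - s)

lemma continuous_gluonNumerator : Continuous gluonNumerator := by
  have h := continuous_pow_succ_mul_log 2
  exact (((h.comp (continuous_const_add 1)).sub h).sub continuous_id).sub (by fun_prop)

lemma continuous_gluonNumeratorDeriv : Continuous gluonNumeratorDeriv := by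
  have h := continuous_pow_succ_mul_log 1
  exact (((h.comp (continuous_const_add 1)).sub h).sub continuous_id).const_mul 3

lemma hasDerivAt_gluonNumerator {s : ℝ} (hs : 0 < s) :
    HasDerivAt gluonNumerator (gluonNumeratorDeriv s) s := by
  have h1 := (hasDerivAt_pow_succ_mul_log 2 (x := 1 + s) (by positivity)).comp_const_add 1 s
  have h2 := hasDerivAt_pow_succ_mul_log 2 hs.ne'
  refine (((h1.fun_sub h2).fun_sub (hasDerivAt_id s)).fun_sub
    ((hasDerivAt_pow 2 s).const_mul (5 / 2))).congr_deriv ?_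
  simp only [gluonNumeratorDeriv]
  push_cast
  ring

lemma hasDerivAt_gluonNumeratorDeriv {s : ℝ} (hs : 0 < s) :
    HasDerivAt gluonNumeratorDeriv (6 * ((1 + s) * log (1 + s) - s * log s)) s := by
  have h1 := (hasDerivAt_pow_succ_mul_log 1 (x := 1 + s) (by positivity)).comp_const_add 1 s
  have h2 := hasDerivAt_pow_succ_mul_log 1 hs.ne'
  refine (((h1.fun_sub h2).fun_sub (hasDerivAt_id s)).const_mul 3).congr_deriv ?_
  push_cast
  ring

lemma gluonNumeratorDeriv_pos {s : ℝ} (hs : 0 < s) : 0 < gluonNumeratorDeriv s := by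
  have h := apply_lt_apply_of_hasDerivAt_pos continuous_gluonNumeratorDeriv.continuousOn
    (fun x hx => hasDerivAt_gluonNumeratorDeriv hx)
    (fun x hx => by linarith [mul_log_lt_one_add_mul_log_one_add hx]) hs
  simpa [gluonNumeratorDeriv] using h

lemma gluonNumerator_pos {s : ℝ} (hs : 0 < s) : 0 < gluonNumerator s := by
  have h := apply_lt_apply_of_hasDerivAt_pos continuous_gluonNumerator.continuousOn
    (fun x hx => hasDerivAt_gluonNumerator hx) (fun x hx => gluonNumeratorDeriv_pos hx) hs
  simpa [gluonNumerator] using h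

theorem gluon_vacuum_positivity (ν : ℝ) (hν : 0 < ν) :
    0 < 3 * (-1 / ν - ν * Real.log ν + ((1 + ν) ^ 3 / ν ^ 2) * Real.log (1 + ν)) - 15 / 2 := by
  have h_eq : 3 * (-1 / ν - ν * log ν + ((1 + ν) ^ 3 / ν ^ 2) * log (1 + ν)) - 15 / 2
      = 3 * gluonNumerator ν / ν ^ 2 := by
    simp only [gluonNumerator]
    field_simp
    ring
  rw [h_eq]
  have hH := gluonNumerator_pos hν
  positivity
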